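/- If an L-M-derectangularising sequence D_1, …, D_k exists, then there is one D'_1, …, D'_k of the same length with |D'_i| ≤ 3 for every i. -/

import Mathlib

inductive Entry | zero | one | star
deriving DecidableEq

def Rectangular {α β : Type*} (R : Set (α × β)) : Prop :=
  ∀ i j i' j', (i, i') ∈ R → (i, j') ∈ R → (j, i') ∈ R → (j, j') ∈ R

def comp {α β γ : Type*} (R : Set (α × β)) (S : Set (β × γ)) : Set (α × γ) :=
  {p | ∃ b, (p.1, b) ∈ R ∧ (b, p.2) ∈ S}

def H {D : Type*} (M : D → D → Entry) (X Y : Set D) : Set (D × D) :=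
  {p | p.1 ∈ X ∧ p.2 ∈ Y ∧ M p.1 p.2 = Entry.star}

/-- `M|_{X×Y}` is pure: it has no `0` entries or no `1` entries. -/
def MatPure {D : Type*} (M : D → D → Entry) (X Y : Set D) : Prop :=
  (∀ i ∈ X, ∀ j ∈ Y, M i j ≠ Entry.zero) ∨ (∀ i ∈ X, ∀ j ∈ Y, M i j ≠ Entry.one)

/-- `hChain M D₁ D₂ [D₃,…,D_k] = H M D₁ D₂ ∘ H M D₂ D₃ ∘ ⋯ ∘ H M D_{k-1} D_k` -/
def hChain {D : Type*} (M : D → D → Entry) : Set D → Set D → List (Set D) → Set (D × D)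
  | X, Y, [] => H M X Y
  | X, Y, Z :: rest => comp (H M X Y) (hChain M Y Z rest)

/-- `Ds` is an `L`-`M`-derectangularising sequence: each member lies in `L`, the set
of members is `M`-purifying, and the composed relation is not rectangular. -/
def IsDerect {D : Type*} (M : D → D → Entry) (L : Set (Set D)) : List (Set D) → Prop
  | X :: Y :: rest =>
      (∀ Z ∈ X :: Y :: rest, Z ∈ L) ∧
      (∀ A ∈ X :: Y :: rest, ∀ B ∈ X :: Y :: rest, MatPure M A B) ∧
      ¬ Rectangular (hChain M X Y rest)
  | _ => False

/-!
A non-rectangularity witness for `H_{D₁,D₂} ∘ ⋯ ∘ H_{D_{k-1},D_k}` consists of three pairs in the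
composed relation and a fourth pair outside it. Each of the three pairs is realised by a path
`x₁ ∈ D₁, …, x_k ∈ D_k`; keeping in each `D_t` only the (at most three) points these paths visit at
step `t` preserves the three pairs, while the smaller composed relation is contained in the old one,
so the fourth pair is still missing. Membership in the subset-closed `L` and purity pass to subsets.
-/

open List

theorem List.Forall₂.exists_rel_of_mem {α β : Type*} {R : α → β → Prop} {l₁ : List α}
    {l₂ : List β} (h : Forall₂ R l₁ l₂) {a : α} (ha : a ∈ l₁) : ∃ b ∈ l₂, R a b := by
  induction h with
  | nil => simp at ha
  | @cons _ b _ _ hab _ ih =>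
    rcases mem_cons.1 ha with rfl | ha
    · exact ⟨b, mem_cons_self, hab⟩
    · obtain ⟨c, hc, hac⟩ := ih ha
      exact ⟨c, mem_cons_of_mem _ hc, hac⟩

section

variable {D : Type*} {M : D → D → Entry}

theorem MatPure.mono {X Y X' Y' : Set D} (h : MatPure M X Y) (hX : X' ⊆ X) (hY : Y' ⊆ Y) :
    MatPure M X' Y' :=
  h.imp (fun h i hi j hj => h i (hX hi) j (hY hj)) (fun h i hi j hj => h i (hX hi) j (hY hj))

theorem H_mono {X Y X' Y' : Set D} (hX : X' ⊆ X) (hY : Y' ⊆ Y) : H M X' Y' ⊆ H M X Y :=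
  fun _ ⟨hx, hy, hstar⟩ => ⟨hX hx, hY hy, hstar⟩

theorem hChain_mono {X Y X' Y' : Set D} {rest rest' : List (Set D)}
    (h : Forall₂ (· ⊆ ·) (X' :: Y' :: rest') (X :: Y :: rest)) :
    hChain M X' Y' rest' ⊆ hChain M X Y rest := by
  induction rest generalizing X Y X' Y' rest' with
  | nil =>
    rcases h with _ | ⟨hX, _ | ⟨hY, ⟨⟩⟩⟩
    exact H_mono hX hY
  | cons Z rest ih =>
    rcases h with _ | ⟨hX, h⟩
    obtain _ | ⟨hY, _ | ⟨-, -⟩⟩ := id h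
    rintro p ⟨b, hpb, hbp⟩
    exact ⟨b, H_mono hX hY hpb, ih h hbp⟩

theorem fst_mem_of_mem_hChain {X Y : Set D} {rest : List (Set D)} {p : D × D}
    (hp : p ∈ hChain M X Y rest) : p.1 ∈ X := by
  cases rest with
  | nil => exact hp.1
  | cons Z rest => exact hp.choose_spec.1.1

theorem exists_small_hChain_superset {S : Set (D × D)} (hS : S.Finite) {X Y : Set D}
    {rest : List (Set D)} (h : S ⊆ hChain M X Y rest) :
    ∃ X' Y' rest', Forall₂ (· ⊆ ·) (X' :: Y' :: rest') (X :: Y :: rest) ∧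
      (∀ Z ∈ X' :: Y' :: rest', Z.ncard ≤ S.ncard) ∧ S ⊆ hChain M X' Y' rest' := by
  induction rest generalizing S X Y with
  | nil =>
    refine ⟨Prod.fst '' S, Prod.snd '' S, [], ?_, ?_, ?_⟩
    · refine .cons ?_ (.cons ?_ .nil) <;> rintro _ ⟨p, hp, rfl⟩
      exacts [(h hp).1, (h hp).2.1]
    · simpa using ⟨Set.ncard_image_le hS, Set.ncard_image_le hS⟩
    · exact fun p hp => ⟨Set.mem_image_of_mem _ hp, Set.mem_image_of_mem _ hp, (h hp).2.2⟩
  | cons Z rest ih =>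
    -- quantified over all `p` so that `choose` returns a plain function `b : D × D → D`
    have hmid : ∀ p, ∃ b, p ∈ S → (p.1, b) ∈ H M X Y ∧ (b, p.2) ∈ hChain M Y Z rest := fun p =>
      (em (p ∈ S)).elim (fun hp => (h hp).imp fun _ hb _ => hb)
        (fun hp => ⟨p.1, fun hp' => absurd hp' hp⟩)
    choose b hb using hmid
    have hS₂ : (fun p => (b p, p.2)) '' S ⊆ hChain M Y Z rest := by
      rintro _ ⟨p, hp, rfl⟩
      exact (hb p hp).2
    obtain ⟨Y', Z', rest', hsub, hcard, hS'⟩ := ih (hS.image _) hS₂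
    refine ⟨Prod.fst '' S, Y', Z' :: rest', .cons ?_ hsub, ?_, ?_⟩
    · rintro _ ⟨p, hp, rfl⟩
      exact (hb p hp).1.1
    · rintro W (_ | ⟨_, hW⟩)
      exacts [Set.ncard_image_le hS, (hcard W hW).trans (Set.ncard_image_le hS)]
    · intro p hp
      have hbp : (b p, p.2) ∈ hChain M Y' Z' rest' := hS' ⟨p, hp, rfl⟩
      exact ⟨b p, ⟨⟨p, hp, rfl⟩, fst_mem_of_mem_hChain hbp, (hb p hp).1.2.2⟩, hbp⟩

theorem IsDerect.of_forall₂_subset {L : Set (Set D)} (hL : ∀ A ∈ L, ∀ B ⊆ A, B ∈ L)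
    {X Y X' Y' : Set D} {rest rest' : List (Set D)} (h : IsDerect M L (X :: Y :: rest))
    (hsub : Forall₂ (· ⊆ ·) (X' :: Y' :: rest') (X :: Y :: rest))
    (hrect : ¬ Rectangular (hChain M X' Y' rest')) : IsDerect M L (X' :: Y' :: rest') := by
  obtain ⟨hmem, hpure, -⟩ := h
  refine ⟨fun W hW => ?_, fun A hA B hB => ?_, hrect⟩
  · obtain ⟨Z, hZ, hWZ⟩ := hsub.exists_rel_of_mem hW
    exact hL Z (hmem Z hZ) W hWZ
  · obtain ⟨A₀, hA₀, hAA₀⟩ := hsub.exists_rel_of_mem hA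
    obtain ⟨B₀, hB₀, hBB₀⟩ := hsub.exists_rel_of_mem hB
    exact (hpure A₀ hA₀ B₀ hB₀).mono hAA₀ hBB₀

end

theorem derect_small_sets_general {D : Type} (M : D → D → Entry)
    (L : Set (Set D)) (hL : ∀ A ∈ L, ∀ B ⊆ A, B ∈ L)
    (Ds : List (Set D)) (h : IsDerect M L Ds) :
    ∃ Ds' : List (Set D), IsDerect M L Ds' ∧
      Ds'.length = Ds.length ∧ ∀ X ∈ Ds', X.ncard ≤ 3 := by
  classical
  match Ds, h with
  | X :: Y :: rest, h =>
    have hnrect := h.2.2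
    simp only [Rectangular, not_forall] at hnrect
    obtain ⟨i, j, i', j', hii', hij', hji', hjj'⟩ := hnrect
    set S : Finset (D × D) := {(i, i'), (i, j'), (j, i')}
    have hS : (S : Set (D × D)) ⊆ hChain M X Y rest := by
      simp [S, Set.insert_subset_iff, hii', hij', hji']
    obtain ⟨X', Y', rest', hsub, hcard, hS'⟩ := exists_small_hChain_superset S.finite_toSet hS
    refine ⟨X' :: Y' :: rest', h.of_forall₂_subset hL hsub fun hrect => hjj' ?_,
      hsub.length_eq, fun Z hZ => (hcard Z hZ).trans ?_⟩
    · exact hChain_mono hsub (hrect i j i' j' (hS' (by simp [S])) (hS' (by simp [S]))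
        (hS' (by simp [S])))
    · simpa only [Set.ncard_coe_finset] using Finset.card_le_three

theorem derect_small_sets {D : Type} [Fintype D] (M : D → D → Entry)
    (hsym : ∀ i j, M i j = M j i)
    (L : Set (Set D)) (hL : ∀ A ∈ L, ∀ B ⊆ A, B ∈ L)
    (Ds : List (Set D)) (h : IsDerect M L Ds) :
    ∃ Ds' : List (Set D), IsDerect M L Ds' ∧
      Ds'.length = Ds.length ∧ ∀ X ∈ Ds', X.ncard ≤ 3 :=
  derect_small_sets_general M L hL Ds h
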